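/- arXiv:1204.3240 — 4 statements merged into one kernel-verified Lean document; each statement's English description precedes it below -/
import Mathlib

section
/- For every nondeterministic bottom-up finite tree automaton there exists a deterministic bottom-up finite tree automaton accepting the same tree language (via the subset/macrostate construction). -/
/-- Ranked terms (ground terms) over a ranked alphabet `F` with arity `ar`. -/
inductive RTerm (F : Type) (ar : F → ℕ) : Type
  | mk (f : F) (children : Fin (ar f) → RTerm F ar) : RTerm F ar

/-- A (bottom-up) nondeterministic finite tree automaton with state type `Q`. -/
structure NFTA (F : Type) (ar : F → ℕ) (Q : Type) where
  Qf : Set Q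
  Δ : ∀ f : F, (Fin (ar f) → Q) → Q → Prop

namespace NFTA

variable {F : Type} {ar : F → ℕ} {Q : Type}

/-- `A.Run t q` means `t →*_A q`. -/
inductive Run (A : NFTA F ar Q) : RTerm F ar → Q → Prop
  | step {f : F} {ts : Fin (ar f) → RTerm F ar} {qs : Fin (ar f) → Q} {q : Q} :
      A.Δ f qs q → (∀ i, Run A (ts i) (qs i)) → Run A (RTerm.mk f ts) q

/-- The tree language of an NFTA. -/
def language (A : NFTA F ar Q) : Set (RTerm F ar) :=
  {t | ∃ q ∈ A.Qf, A.Run t q}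

/-- No two rules share the same left-hand side. -/
def Deterministic (A : NFTA F ar Q) : Prop :=
  ∀ (f : F) (qs : Fin (ar f) → Q) (q q' : Q), A.Δ f qs q → A.Δ f qs q' → q = q'

/-- At least one rule for every left-hand side. -/
def Complete (A : NFTA F ar Q) : Prop :=
  ∀ (f : F) (qs : Fin (ar f) → Q), ∃ q : Q, A.Δ f qs q

/-- A state is reachable (accessible) if some ground term runs to it. -/
def Reachable (A : NFTA F ar Q) (q : Q) : Prop :=
  ∃ t : RTerm F ar, A.Run t q

end NFTA

/-- The subset (macrostate) construction. -/
def NFTA.det {F : Type} {ar : F → ℕ} {Q : Type} (A : NFTA F ar Q) :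
    NFTA F ar (Set Q) where
  Qf := {M | ∃ q ∈ M, q ∈ A.Qf}
  Δ := fun f Ms M =>
    M = {q | ∃ qs : Fin (ar f) → Q, (∀ i, qs i ∈ Ms i) ∧ A.Δ f qs q}

/-! On every tree, the subset automaton runs to exactly one macrostate: the set of states the
original automaton can reach on that tree. Acceptance then means that this set meets `Qf`. -/

namespace NFTA

variable {F : Type} {ar : F → ℕ} {Q : Type} (A : NFTA F ar Q)

theorem run_mk_iff {f : F} {ts : Fin (ar f) → RTerm F ar} {q : Q} :
    A.Run (RTerm.mk f ts) q ↔ ∃ qs : Fin (ar f) → Q, A.Δ f qs q ∧ ∀ i, A.Run (ts i) (qs i) := by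
  constructor
  · rintro ⟨hΔ, hruns⟩
    exact ⟨_, hΔ, hruns⟩
  · rintro ⟨qs, hΔ, hruns⟩
    exact Run.step hΔ hruns

theorem det_deterministic : A.det.Deterministic :=
  fun _ _ _ _ h h' => h.trans h'.symm

theorem det_Δ_reachSets_iff {f : F} {ts : Fin (ar f) → RTerm F ar} {M : Set Q} :
    A.det.Δ f (fun i => {q | A.Run (ts i) q}) M ↔ M = {q | A.Run (RTerm.mk f ts) q} := by
  have hset : {q | ∃ qs : Fin (ar f) → Q, (∀ i, qs i ∈ {q | A.Run (ts i) q}) ∧ A.Δ f qs q} =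
      {q | A.Run (RTerm.mk f ts) q} := by
    ext q
    simp only [Set.mem_ofPred_eq, run_mk_iff, and_comm]
  exact Eq.congr_right hset

theorem det_run_iff {t : RTerm F ar} {M : Set Q} :
    A.det.Run t M ↔ M = {q | A.Run t q} := by
  induction t generalizing M with
  | mk f ts ih =>
    have hchildren : ∀ Ms : Fin (ar f) → Set Q,
        (∀ i, A.det.Run (ts i) (Ms i)) ↔ Ms = fun i => {q | A.Run (ts i) q} := by
      intro Ms
      simp only [ih, funext_iff]
    rw [run_mk_iff]
    simp only [hchildren, exists_eq_right, det_Δ_reachSets_iff]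

theorem det_language : A.det.language = A.language := by
  ext t
  simp only [language, det_run_iff, exists_eq_right]
  exact exists_congr fun _ => and_comm

end NFTA

theorem nfta_determinization_general {F : Type} {ar : F → ℕ} {Q : Type}
    (A : NFTA F ar Q) :
    A.det.Deterministic ∧ A.det.language = A.language :=
  ⟨A.det_deterministic, A.det_language⟩

/-- every NFTA has an equivalent DFTA, via the subset construction. -/
theorem nfta_determinization {F : Type} {ar : F → ℕ} {Q : Type} [Finite Q]
    (A : NFTA F ar Q) :
    A.det.Deterministic ∧ A.det.language = A.language :=
  nfta_determinization_general A
end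

section
/- If q ⪯ r in the downward simulation of an NFTA A and t →*_A q for a ground term t, then t →*_A r; i.e., the downward language of q is included in the downward language of r. -/
/-- `R` satisfies the downward-simulation transfer condition. -/
def NFTA.IsDwSim {F : Type} {ar : F → ℕ} {Q : Type} (A : NFTA F ar Q)
    (R : Q → Q → Prop) : Prop :=
  ∀ q r, R q r → ∀ (f : F) (qs : Fin (ar f) → Q), A.Δ f qs q →
    ∃ rs : Fin (ar f) → Q, A.Δ f rs r ∧ ∀ i, R (qs i) (rs i)

/-- The downward simulation preorder: the largest relation satisfying the transfer
condition. -/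
def NFTA.DwSim {F : Type} {ar : F → ℕ} {Q : Type} (A : NFTA F ar Q)
    (q r : Q) : Prop :=
  ∃ R : Q → Q → Prop, A.IsDwSim R ∧ R q r

theorem NFTA.IsDwSim.run_of_run {F : Type} {ar : F → ℕ} {Q : Type} {A : NFTA F ar Q}
    {R : Q → Q → Prop} (hR : A.IsDwSim R) {t : RTerm F ar} {q r : Q} (hqr : R q r)
    (hrun : A.Run t q) : A.Run t r := by
  induction hrun generalizing r with
  | step hΔ _ ih =>
    obtain ⟨rs, hΔr, hRs⟩ := hR _ _ hqr _ _ hΔ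
    exact .step hΔr fun i => ih i (hRs i)

/-- downward simulation implies inclusion of downward languages. -/
theorem dwsim_downward_language {F : Type} {ar : F → ℕ} {Q : Type}
    (A : NFTA F ar Q) (q r : Q) (hsim : A.DwSim q r)
    (t : RTerm F ar) (hrun : A.Run t q) : A.Run t r := by
  obtain ⟨R, hR, hqr⟩ := hsim
  exact hR.run_of_run hqr hrun
end

section
/- The antichain-based inclusion algorithm is correct: L(A1) ⊆ L(A2) fails if and only if there exists a ground term t, a final state p of A1 with t →*_{A1} p, such that the set s = {r ∈ Q2 | t →*_{A2} r} of all states of A2 reachable over t contains no final state of A2. -/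
namespace NFTA

variable {F : Type} {ar : F → ℕ} {Q : Type}

theorem setOf_run_inter_Qf_eq_empty_iff_notMem_language (A : NFTA F ar Q) (t : RTerm F ar) :
    {q | A.Run t q} ∩ A.Qf = ∅ ↔ t ∉ A.language := by
  simp [Set.eq_empty_iff_forall_notMem, language, and_comm]

end NFTA

/-- correctness of antichain-based inclusion checking. Inclusion
`L(A1) ⊆ L(A2)` fails iff there is a ground term `t` and a final state `p` of `A1`
with `t →* p` such that the set of all states of `A2` reachable over `t` contains
no final state of `A2`. -/
theorem antichain_inclusion_correct {F : Type} {ar : F → ℕ} {Q1 Q2 : Type}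
    (A1 : NFTA F ar Q1) (A2 : NFTA F ar Q2) :
    ¬ (A1.language ⊆ A2.language) ↔
      ∃ (t : RTerm F ar) (p : Q1), p ∈ A1.Qf ∧ A1.Run t p ∧
        {r : Q2 | A2.Run t r} ∩ A2.Qf = ∅ := by
  rw [Set.not_subset]
  simp only [NFTA.setOf_run_inter_Qf_eq_empty_iff_notMem_language]
  constructor
  · rintro ⟨t, ⟨p, hp, hrun⟩, ht⟩
    exact ⟨t, p, hp, hrun, ht⟩
  · rintro ⟨t, p, hp, hrun, ht⟩
    exact ⟨t, ⟨p, hp, hrun⟩, ht⟩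
end

section
/- For the pairs generated in the antichain construction, it suffices to keep maximal antichains: if (p, s) witnesses a counterexample to inclusion (p ∈ Qf1 and s ∩ Qf2 = ∅) and s ⊆ s', then any pair (p, s'') generated with s'' ⊆ s also witnesses a counterexample; consequently, discarding a pair (p, s') whenever some (p, s) with s ⊆ s' is already present preserves completeness of counterexample detection. -/
theorem Set.inter_eq_empty_of_subset_left {α : Type*} {s t u : Set α} (hst : s ⊆ t)
    (ht : t ∩ u = ∅) : s ∩ u = ∅ :=
  Set.subset_eq_empty (Set.inter_subset_inter_left u hst) ht

/-- in antichain-based inclusion checking it suffices to keep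
⊆-minimal pairs. First, if `(p, s)` witnesses a counterexample (`p ∈ Qf1` and
`s ∩ Qf2 = ∅`) and `s ⊆ s'`, then any pair `(p, s'')` with `s'' ⊆ s` also
witnesses a counterexample. Consequently, any collection of kept pairs that, for
every generated pair, retains some pair with the same first component and a
smaller-or-equal second component, still detects a counterexample whenever one
exists. -/
theorem antichain_keep_minimal {F : Type} {ar : F → ℕ} {Q1 Q2 : Type}
    (A1 : NFTA F ar Q1) (A2 : NFTA F ar Q2) :
    (∀ (p : Q1) (s s' s'' : Set Q2), s ⊆ s' →
      p ∈ A1.Qf → s ∩ A2.Qf = ∅ → s'' ⊆ s → p ∈ A1.Qf ∧ s'' ∩ A2.Qf = ∅) ∧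
    (∀ kept : Set (Q1 × Set Q2),
      (∀ (t : RTerm F ar) (p : Q1), A1.Run t p →
        ∃ s : Set Q2, (p, s) ∈ kept ∧ s ⊆ {r : Q2 | A2.Run t r}) →
      (∃ (t : RTerm F ar) (p : Q1), p ∈ A1.Qf ∧ A1.Run t p ∧
        {r : Q2 | A2.Run t r} ∩ A2.Qf = ∅) →
      ∃ (p : Q1) (s : Set Q2), (p, s) ∈ kept ∧ p ∈ A1.Qf ∧ s ∩ A2.Qf = ∅) := by
  refine ⟨fun p s _ s'' _ hp hs hs'' => ⟨hp, Set.inter_eq_empty_of_subset_left hs'' hs⟩, ?_⟩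
  rintro kept hkept ⟨t, p, hp, hrun, hdisj⟩
  obtain ⟨s, hkept_s, hs⟩ := hkept t p hrun
  exact ⟨p, s, hkept_s, hp, Set.inter_eq_empty_of_subset_left hs hdisj⟩
end
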